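/- Let K ≥ 2 and k̃ ∈ Fin K. Let v : Fin K → ℕ → ℕ → [0,1] and β : ℕ → ℕ → ℝ. Assume: (i) there exist real numbers β̲ > 0 and β̄ < 1 such that, eventually along the product filter, β̲ ≤ β(n,m) ≤ β̄; (ii) for every k ≠ k̃, v_k(n,m) → 1 along the product filter; (iii) v_{k̃}(n,m) → 0 along the product filter. Then the conditional false non-discovery rate of the thresholding decision, cFNR(n,m) = cFNR(d̂(v(n,m), β(n,m)), v(n,m)), converges to 0 along the product filter. -/

import Mathlib

/- Eventually the threshold separates the null hypothesis `k₀` (posterior tending to `0`, below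
`β ≥ βlo > 0`) from the others (posteriors tending to `1`, above `β ≤ βhi < 1`). From then on
exactly `k₀` is not rejected, so the cFNR equals the posterior of `k₀`, which tends to `0`. -/

open Filter Topology

variable {ι : Type*}

noncomputable def thresholdDecision (x : ι → ℝ) (b : ℝ) (k : ι) : ℝ :=
  if x k > b then 1 else 0

noncomputable def cFNR [Fintype ι] (d x : ι → ℝ) : ℝ :=
  (∑ k, (1 - d k) * x k) / max (∑ k, (1 - d k)) 1

theorem cFNR_eq_of_one_sub_eq_single [Fintype ι] [DecidableEq ι] {d : ι → ℝ} (x : ι → ℝ)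
    {i₀ : ι} (hd : ∀ k, 1 - d k = (Pi.single i₀ 1 : ι → ℝ) k) : cFNR d x = x i₀ := by
  simp [cFNR, hd, Pi.single_apply]

theorem one_sub_thresholdDecision_eq_single [DecidableEq ι] {x : ι → ℝ} {b : ℝ} {i₀ : ι}
    (h₀ : x i₀ ≤ b) (h : ∀ i ≠ i₀, b < x i) (k : ι) :
    1 - thresholdDecision x b k = (Pi.single i₀ 1 : ι → ℝ) k := by
  by_cases hk : k = i₀
  · subst hk
    simp [thresholdDecision, h₀.not_gt]
  · simp [thresholdDecision, h k hk, hk]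

theorem cFNR_thresholdDecision_eq [Fintype ι] {x : ι → ℝ} {b : ℝ} {i₀ : ι}
    (h₀ : x i₀ ≤ b) (h : ∀ i ≠ i₀, b < x i) : cFNR (thresholdDecision x b) x = x i₀ := by
  classical
  exact cFNR_eq_of_one_sub_eq_single x (one_sub_thresholdDecision_eq_single h₀ h)

theorem eventually_threshold_separates {α : Type*} [Finite ι] {l : Filter α}
    {x : ι → α → ℝ} {b : α → ℝ} {i₀ : ι} {blo bhi : ℝ} (hlo : 0 < blo) (hhi : bhi < 1)
    (hb : ∀ᶠ a in l, blo ≤ b a ∧ b a ≤ bhi) (h1 : ∀ i ≠ i₀, Tendsto (x i) l (𝓝 1))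
    (h0 : Tendsto (x i₀) l (𝓝 0)) :
    ∀ᶠ a in l, x i₀ a ≤ b a ∧ ∀ i ≠ i₀, b a < x i a := by
  have hgt : ∀ᶠ a in l, ∀ i ≠ i₀, bhi < x i a := by
    refine eventually_all.2 fun i => ?_
    by_cases hi : i = i₀
    · exact Eventually.of_forall fun _ hne => absurd hi hne
    · exact ((h1 i hi).eventually (eventually_gt_nhds hhi)).mono fun _ ha _ => ha
  filter_upwards [hb, hgt, h0.eventually (eventually_lt_nhds hlo)] with a hba hgta hlta
  exact ⟨by linarith [hba.1], fun i hi => hba.2.trans_lt (hgta i hi)⟩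

theorem cFNR_tendsto_zero_general
    (K : ℕ) (k₀ : Fin K)
    (v : Fin K → ℕ → ℕ → ℝ)
    (β : ℕ → ℕ → ℝ)
    (hβ : ∃ βlo βhi : ℝ, 0 < βlo ∧ βhi < 1 ∧
      ∀ᶠ p : ℕ × ℕ in atTop ×ˢ atTop, βlo ≤ β p.1 p.2 ∧ β p.1 p.2 ≤ βhi)
    (hv1 : ∀ k : Fin K, k ≠ k₀ →
      Tendsto (fun p : ℕ × ℕ => v k p.1 p.2) (atTop ×ˢ atTop) (nhds 1))
    (hv0 : Tendsto (fun p : ℕ × ℕ => v k₀ p.1 p.2) (atTop ×ˢ atTop) (nhds 0)) :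
    Tendsto
      (fun p : ℕ × ℕ =>
        (∑ k : Fin K, (1 - (if v k p.1 p.2 > β p.1 p.2 then (1 : ℝ) else 0)) * v k p.1 p.2) /
          max (∑ k : Fin K, (1 - (if v k p.1 p.2 > β p.1 p.2 then (1 : ℝ) else 0))) 1)
      (atTop ×ˢ atTop) (nhds 0) := by
  obtain ⟨βlo, βhi, hlo, hhi, hβev⟩ := hβ
  have hsep := eventually_threshold_separates (x := fun k (p : ℕ × ℕ) => v k p.1 p.2)
    (b := fun p : ℕ × ℕ => β p.1 p.2) hlo hhi hβev hv1 hv0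
  refine hv0.congr' ?_
  filter_upwards [hsep] with p ⟨h₀, h⟩
  exact (cFNR_thresholdDecision_eq (x := fun k => v k p.1 p.2) h₀ h).symm

/-- Convergence of the conditional false non-discovery rate of the thresholding decision
to zero: `cFNR(d, v) = (Σ_k (1 − d_k) v_k) / max(Σ_k (1 − d_k), 1)` with
`d_k = 1` iff `v_k > β`. -/
theorem cFNR_tendsto_zero
    (K : ℕ) (hK : 2 ≤ K) (k₀ : Fin K)
    (v : Fin K → ℕ → ℕ → ℝ)
    (hv01 : ∀ k n m, 0 ≤ v k n m ∧ v k n m ≤ 1)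
    (β : ℕ → ℕ → ℝ)
    (hβ : ∃ βlo βhi : ℝ, 0 < βlo ∧ βhi < 1 ∧
      ∀ᶠ p : ℕ × ℕ in atTop ×ˢ atTop, βlo ≤ β p.1 p.2 ∧ β p.1 p.2 ≤ βhi)
    (hv1 : ∀ k : Fin K, k ≠ k₀ →
      Tendsto (fun p : ℕ × ℕ => v k p.1 p.2) (atTop ×ˢ atTop) (nhds 1))
    (hv0 : Tendsto (fun p : ℕ × ℕ => v k₀ p.1 p.2) (atTop ×ˢ atTop) (nhds 0)) :
    Tendsto
      (fun p : ℕ × ℕ =>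
        (∑ k : Fin K, (1 - (if v k p.1 p.2 > β p.1 p.2 then (1 : ℝ) else 0)) * v k p.1 p.2) /
          max (∑ k : Fin K, (1 - (if v k p.1 p.2 > β p.1 p.2 then (1 : ℝ) else 0))) 1)
      (atTop ×ˢ atTop) (nhds 0) :=
  cFNR_tendsto_zero_general K k₀ v β hβ hv1 hv0
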